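/- arXiv:1403.2226 — 3 statements merged into one kernel-verified Lean document; each statement's English description precedes it below -/
import Mathlib

section
/- Let A be a symmetric real n×n matrix, 2m = Σ_{i,j} A_{ij} > 0, let g : Fin n → C be a labeling into a finite label set C, let i₀ be a node with g(i₀) = r, let s ≠ r, and let g' agree with g except g'(i₀) = s. For each label t set d_t = (1/(2m))(Σ_{j ≠ i₀} (A_{i₀ j} + A_{j i₀})·[g(j)=t] + A_{i₀ i₀}) and d = (1/(2m)) Σ_j A_{i₀ j}. Then Q(g') − Q(g) = (−d_r + d_s) + 2d·(a_r(g) − a_s(g)) − 2d². -/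
open Finset

/-- `e_r(g)`: fraction of edges joining vertices within community `r`. -/
noncomputable def eComm {n : ℕ} {C : Type*} [DecidableEq C]
    (A : Matrix (Fin n) (Fin n) ℝ) (m : ℝ) (g : Fin n → C) (r : C) : ℝ :=
  (1 / (2 * m)) * ∑ i, ∑ j,
    A i j * (if g i = r then (1 : ℝ) else 0) * (if g j = r then (1 : ℝ) else 0)

/-- `a_r(g)`: fraction of edges attached to vertices in community `r`. -/
noncomputable def aComm {n : ℕ} {C : Type*} [DecidableEq C]
    (A : Matrix (Fin n) (Fin n) ℝ) (m : ℝ) (g : Fin n → C) (r : C) : ℝ :=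
  (1 / (2 * m)) * ∑ i, ∑ j, A i j * (if g j = r then (1 : ℝ) else 0)

/-- The modularity `Q(g) = Σ_r (e_r - a_r²)`. -/
noncomputable def Qmod {n : ℕ} {C : Type*} [Fintype C] [DecidableEq C]
    (A : Matrix (Fin n) (Fin n) ℝ) (m : ℝ) (g : Fin n → C) : ℝ :=
  ∑ r, (eComm A m g r - (aComm A m g r) ^ 2)

noncomputable def ccInd {C : Type*} [DecidableEq C] (s r t : C) : ℝ :=
  (if s = t then 1 else 0) - (if r = t then 1 else 0)

lemma double_sum_split {n : ℕ} (i₀ : Fin n) (f : Fin n → Fin n → ℝ) :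
    ∑ i, ∑ j, f i j =
      (∑ i ∈ univ.erase i₀, ∑ j ∈ univ.erase i₀, f i j)
        + (∑ i ∈ univ.erase i₀, f i i₀) + (∑ j ∈ univ.erase i₀, f i₀ j) + f i₀ i₀ := by
  rw [← Finset.sum_erase_add univ _ (mem_univ i₀)]
  have h1 : ∀ i, ∑ j, f i j = ∑ j ∈ univ.erase i₀, f i j + f i i₀ :=
    fun i => (Finset.sum_erase_add univ _ (mem_univ i₀)).symm
  simp_rw [h1]
  rw [Finset.sum_add_distrib]; ring

lemma sum_mul_cc {C : Type*} [Fintype C] [DecidableEq C] (f : C → ℝ) (s r : C) :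
    ∑ t, f t * ccInd s r t = f s - f r := by
  unfold ccInd
  simp_rw [mul_sub, mul_ite, mul_one, mul_zero]
  rw [Finset.sum_sub_distrib, Finset.sum_ite_eq, Finset.sum_ite_eq]
  simp

lemma sum_cc_sq {C : Type*} [Fintype C] [DecidableEq C] {s r : C} (hrs : s ≠ r) :
    ∑ t, (ccInd s r t) ^ 2 = 2 := by
  have h : ∀ t : C, (ccInd s r t) ^ 2
      = (if s = t then (1:ℝ) else 0) + (if r = t then 1 else 0) := by
    intro t
    unfold ccInd
    rcases eq_or_ne s t with h1 | h1 <;> rcases eq_or_ne r t with h2 | h2 <;>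
      simp [h1, h2]
    exact absurd (h1.trans h2.symm) hrs
  rw [Finset.sum_congr rfl (fun t _ => h t), Finset.sum_add_distrib,
    Finset.sum_ite_eq, Finset.sum_ite_eq]
  simp; norm_num

/-- Change of modularity when moving node `i₀` from community `r` to community `s`. -/
theorem modularity_change_of_move {n : ℕ} {C : Type*} [Fintype C] [DecidableEq C]
    (A : Matrix (Fin n) (Fin n) ℝ) (hsym : ∀ i j, A i j = A j i)
    (m : ℝ) (hm : 2 * m = ∑ i, ∑ j, A i j) (hmpos : 0 < 2 * m)
    (g g' : Fin n → C) (i₀ : Fin n) (r s : C)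
    (hgr : g i₀ = r) (hrs : s ≠ r)
    (hg'ne : ∀ j : Fin n, j ≠ i₀ → g' j = g j) (hg'i : g' i₀ = s)
    (d : C → ℝ)
    (hd : ∀ t : C, d t = (1 / (2 * m)) *
      ((∑ j ∈ univ.filter (fun j => j ≠ i₀),
        (A i₀ j + A j i₀) * (if g j = t then (1 : ℝ) else 0)) + A i₀ i₀))
    (dd : ℝ) (hdd : dd = (1 / (2 * m)) * ∑ j, A i₀ j) :
    Qmod A m g' - Qmod A m g =
      (- d r + d s) + 2 * dd * (aComm A m g r - aComm A m g s) - 2 * dd ^ 2 := by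
  have ha : ∀ t, aComm A m g' t = aComm A m g t + dd * ccInd s r t := by
    intro t
    unfold aComm
    have hinner : ∀ i : Fin n, (∑ j, A i j * (if g' j = t then (1:ℝ) else 0))
        = (∑ j, A i j * (if g j = t then (1:ℝ) else 0)) + A i i₀ * ccInd s r t := by
      intro i
      rw [← Finset.sum_erase_add univ (fun j => A i j * (if g' j = t then (1:ℝ) else 0))
          (mem_univ i₀),
        ← Finset.sum_erase_add univ (fun j => A i j * (if g j = t then (1:ℝ) else 0))
          (mem_univ i₀)]
      have h1 : ∑ j ∈ univ.erase i₀, A i j * (if g' j = t then (1:ℝ) else 0)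
          = ∑ j ∈ univ.erase i₀, A i j * (if g j = t then (1:ℝ) else 0) :=
        Finset.sum_congr rfl fun j hj => by rw [hg'ne j (Finset.mem_erase.mp hj).1]
      rw [h1, hg'i, hgr]
      unfold ccInd; ring
    rw [Finset.sum_congr rfl fun i _ => hinner i, Finset.sum_add_distrib, mul_add]
    have h2 : ∑ i, A i i₀ * ccInd s r t = (∑ j, A i₀ j) * ccInd s r t := by
      rw [← Finset.sum_mul]
      congr 1
      exact Finset.sum_congr rfl fun i _ => hsym i i₀
    rw [h2, hdd]; ring
  have he : ∀ t, eComm A m g' t = eComm A m g t + d t * ccInd s r t := by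
    intro t
    unfold eComm
    rw [double_sum_split i₀
        (fun i j => A i j * (if g' i = t then (1:ℝ) else 0) * (if g' j = t then 1 else 0)),
      double_sum_split i₀
        (fun i j => A i j * (if g i = t then (1:ℝ) else 0) * (if g j = t then 1 else 0))]
    have hD : (∑ i ∈ univ.erase i₀, ∑ j ∈ univ.erase i₀,
          A i j * (if g' i = t then (1:ℝ) else 0) * (if g' j = t then 1 else 0))
        = ∑ i ∈ univ.erase i₀, ∑ j ∈ univ.erase i₀,
          A i j * (if g i = t then (1:ℝ) else 0) * (if g j = t then 1 else 0) :=
      Finset.sum_congr rfl fun i hi => Finset.sum_congr rfl fun j hj => by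
        rw [hg'ne i (Finset.mem_erase.mp hi).1, hg'ne j (Finset.mem_erase.mp hj).1]
    have hB' : (∑ i ∈ univ.erase i₀,
          A i i₀ * (if g' i = t then (1:ℝ) else 0) * (if g' i₀ = t then 1 else 0))
        = (∑ i ∈ univ.erase i₀, A i i₀ * (if g i = t then (1:ℝ) else 0))
            * (if s = t then 1 else 0) := by
      rw [Finset.sum_mul]
      refine Finset.sum_congr rfl fun i hi => ?_
      rw [hg'ne i (Finset.mem_erase.mp hi).1, hg'i]
    have hB : (∑ i ∈ univ.erase i₀,
          A i i₀ * (if g i = t then (1:ℝ) else 0) * (if g i₀ = t then 1 else 0))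
        = (∑ i ∈ univ.erase i₀, A i i₀ * (if g i = t then (1:ℝ) else 0))
            * (if r = t then 1 else 0) := by
      rw [Finset.sum_mul]
      refine Finset.sum_congr rfl fun i hi => ?_
      rw [hgr]
    have hC' : (∑ j ∈ univ.erase i₀,
          A i₀ j * (if g' i₀ = t then (1:ℝ) else 0) * (if g' j = t then 1 else 0))
        = (∑ j ∈ univ.erase i₀, A i₀ j * (if g j = t then (1:ℝ) else 0))
            * (if s = t then 1 else 0) := by
      rw [Finset.sum_mul]
      refine Finset.sum_congr rfl fun j hj => ?_
      rw [hg'ne j (Finset.mem_erase.mp hj).1, hg'i]; ring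
    have hC : (∑ j ∈ univ.erase i₀,
          A i₀ j * (if g i₀ = t then (1:ℝ) else 0) * (if g j = t then 1 else 0))
        = (∑ j ∈ univ.erase i₀, A i₀ j * (if g j = t then (1:ℝ) else 0))
            * (if r = t then 1 else 0) := by
      rw [Finset.sum_mul]
      refine Finset.sum_congr rfl fun j hj => ?_
      rw [hgr]; ring
    have hd2 : ∑ j ∈ univ.erase i₀, (A i₀ j + A j i₀) * (if g j = t then (1:ℝ) else 0)
        = (∑ j ∈ univ.erase i₀, A i₀ j * (if g j = t then (1:ℝ) else 0))
          + (∑ i ∈ univ.erase i₀, A i i₀ * (if g i = t then (1:ℝ) else 0)) := by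
      rw [← Finset.sum_add_distrib]
      exact Finset.sum_congr rfl fun j hj => by ring
    rw [hD, hB', hB, hC', hC, hg'i, hgr, hd t, Finset.filter_ne', hd2]
    unfold ccInd
    have hss : (if s = t then (1:ℝ) else 0) * (if s = t then 1 else 0)
        = (if s = t then 1 else 0) := by by_cases h : s = t <;> simp [h]
    have hrr : (if r = t then (1:ℝ) else 0) * (if r = t then 1 else 0)
        = (if r = t then 1 else 0) := by by_cases h : r = t <;> simp [h]
    linear_combination (1 / (2 * m)) * A i₀ i₀ * hss - (1 / (2 * m)) * A i₀ i₀ * hrr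
  have hQ : Qmod A m g' - Qmod A m g
      = ∑ t, (d t * ccInd s r t - 2 * aComm A m g t * dd * ccInd s r t
          - dd ^ 2 * (ccInd s r t) ^ 2) := by
    unfold Qmod
    rw [← Finset.sum_sub_distrib]
    exact Finset.sum_congr rfl fun t _ => by rw [he t, ha t]; ring
  have e1 : ∑ t, d t * ccInd s r t = d s - d r := sum_mul_cc d s r
  have e2 : ∑ t, 2 * aComm A m g t * dd * ccInd s r t
      = 2 * aComm A m g s * dd - 2 * aComm A m g r * dd :=
    sum_mul_cc (fun t => 2 * aComm A m g t * dd) s r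
  have e3 : ∑ t, dd ^ 2 * (ccInd s r t) ^ 2 = dd ^ 2 * 2 := by
    rw [← Finset.mul_sum, sum_cc_sq hrs]
  rw [hQ, Finset.sum_sub_distrib, Finset.sum_sub_distrib, e1, e2, e3]
  ring
end

section
/- Let μ, A₁, A₂, m, S be real numbers with A₁ ≠ 0, m ≠ 0, S ≠ 0, and for ρ ≠ 0 and real B define Δ(ρ, B) = (B/(2ρm))·(−μ·(ρA₁ − B)/(ρA₁) + (1 − μ)·A₂/S + (ρA₁ − ρA₂ − B)/(ρm)). If Δ(1, B) ≤ 0 for every real B (i.e., the ground-truth labeling maximizes modularity against every such relabeling in the original graph), then for every ρ > 0, Δ(ρ, B') ≤ 0 for every real B' (i.e., the induced ground-truth labeling maximizes modularity against every such relabeling in the K-core). -/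
/-- If the ground-truth labeling maximizes modularity against every relabeling in the
original graph (`Δ(1, B) ≤ 0` for all `B`), then for every `ρ > 0` the induced ground-truth
labeling maximizes modularity against every relabeling in the K-core (`Δ(ρ, B') ≤ 0`). -/
theorem kcore_preserves_modularity_maximum (μ A₁ A₂ m S : ℝ)
    (hA₁ : A₁ ≠ 0) (hm : m ≠ 0) (hS : S ≠ 0)
    (Δ : ℝ → ℝ → ℝ)
    (hΔ : ∀ ρ : ℝ, ρ ≠ 0 → ∀ B : ℝ,
      Δ ρ B = (B / (2 * ρ * m)) *
        (-μ * (ρ * A₁ - B) / (ρ * A₁) + (1 - μ) * A₂ / S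
          + (ρ * A₁ - ρ * A₂ - B) / (ρ * m)))
    (h1 : ∀ B : ℝ, Δ 1 B ≤ 0) :
    ∀ ρ : ℝ, 0 < ρ → ∀ B' : ℝ, Δ ρ B' ≤ 0 := by
  intro ρ hρ B'
  have hρ' : ρ ≠ 0 := ne_of_gt hρ
  have key : Δ ρ B' = Δ 1 (B' / ρ) := by
    rw [hΔ ρ hρ' B', hΔ 1 one_ne_zero (B' / ρ)]
    field_simp
  rw [key]
  exact h1 _
end

section
/- Let A be an n×n real matrix with nonnegative entries and 2m = Σ_{i,j} A_{ij} > 0, and let g : Fin n → C be a labeling into a finite label set C of cardinality c ≥ 1. Then the modularity satisfies Q(g) = Σ_{r ∈ C} (e_r(g) − a_r(g)²) ≤ 1 − 1/c. -/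
open Finset

/-!
Since `e_r ≤ a_r` and `Σ_r a_r = 1`, the modularity is at most `1 - Σ_r a_r²`, and by
Cauchy–Schwarz a probability vector on `c` points has `Σ_r a_r² ≥ 1 / c`.
-/

theorem one_div_card_le_sum_sq {ι : Type*} [Fintype ι] {a : ι → ℝ} (ha : ∑ i, a i = 1) :
    1 / (Fintype.card ι : ℝ) ≤ ∑ i, a i ^ 2 := by
  have hcs : 1 ≤ (Fintype.card ι : ℝ) * ∑ i, a i ^ 2 := by
    simpa [ha] using sq_sum_le_card_mul_sum_sq (s := univ) (f := a)
  have hcard : (0 : ℝ) < Fintype.card ι := by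
    by_contra! h
    norm_num [le_antisymm h (Nat.cast_nonneg _)] at hcs
  rw [div_le_iff₀ hcard]
  linarith

theorem sum_sub_sq_le_one_sub_one_div_card {ι : Type*} [Fintype ι] {e a : ι → ℝ}
    (hea : ∀ i, e i ≤ a i) (ha : ∑ i, a i = 1) :
    ∑ i, (e i - a i ^ 2) ≤ 1 - 1 / (Fintype.card ι : ℝ) := by
  have he : ∑ i, e i ≤ 1 := ha ▸ sum_le_sum fun i _ => hea i
  rw [sum_sub_distrib]
  linarith [one_div_card_le_sum_sq ha]

section Modularity

variable {n : ℕ} {C : Type*} [DecidableEq C]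

theorem sum_aComm [Fintype C] (A : Matrix (Fin n) (Fin n) ℝ) (m : ℝ) (g : Fin n → C) :
    ∑ r, aComm A m g r = (1 / (2 * m)) * ∑ i, ∑ j, A i j := by
  simp only [aComm, ← mul_sum]
  congr 1
  rw [sum_comm]
  refine sum_congr rfl fun i _ => ?_
  rw [sum_comm]
  simp

theorem eComm_le_aComm {A : Matrix (Fin n) (Fin n) ℝ} (hA : ∀ i j, 0 ≤ A i j) {m : ℝ}
    (hm : 0 ≤ m) (g : Fin n → C) (r : C) : eComm A m g r ≤ aComm A m g r := by
  unfold eComm aComm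
  gcongr with i _ j _
  split_ifs <;> simp [hA i j]

end Modularity

theorem modularity_upper_bound_general {n : ℕ} {C : Type*} [Fintype C] [DecidableEq C]
    (A : Matrix (Fin n) (Fin n) ℝ) (hA : ∀ i j, 0 ≤ A i j)
    (m : ℝ) (hm : 2 * m = ∑ i, ∑ j, A i j) (hmpos : 0 < 2 * m)
    (g : Fin n → C) :
    Qmod A m g ≤ 1 - 1 / (Fintype.card C : ℝ) := by
  have ha : ∑ r, aComm A m g r = 1 := by
    rw [sum_aComm, ← hm, one_div_mul_cancel hmpos.ne']
  exact sum_sub_sq_le_one_sub_one_div_card (eComm_le_aComm hA (by linarith) g) ha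

/-- For a nonnegative adjacency matrix and `c ≥ 1` labels,
the modularity satisfies `Q(g) ≤ 1 - 1/c`. -/
theorem modularity_upper_bound {n : ℕ} {C : Type*} [Fintype C] [DecidableEq C]
    (A : Matrix (Fin n) (Fin n) ℝ) (hA : ∀ i j, 0 ≤ A i j)
    (m : ℝ) (hm : 2 * m = ∑ i, ∑ j, A i j) (hmpos : 0 < 2 * m)
    (g : Fin n → C) (hc : 1 ≤ Fintype.card C) :
    Qmod A m g ≤ 1 - 1 / (Fintype.card C : ℝ) :=
  modularity_upper_bound_general A hA m hm hmpos g
end
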